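/- Let μ ∈ P_+, let q > 0 be real, let k_α be real W-invariant parameters, let t_α be W-invariant complex parameters, and let ε ∈ {+1, −1}. Provided all denominators are nonzero, Σ_{w∈W} ∏_{α^∨∈R_w^∨} t_α(1 − t_α^{−1} q^{ε⟨α^∨, μ+ρ_k⟩})/(1 − t_α q^{ε⟨α^∨, μ+ρ_k⟩}) = W(t) · ∏_{α∈R_+} (1 − q^{ε⟨α^∨, μ+ρ_k⟩})/(1 − t_α q^{ε⟨α^∨, μ+ρ_k⟩}), where W(t) = Σ_{w∈W} ∏_{α^∨∈R_w^∨} t_α is the Poincaré polynomial of the Weyl group. -/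

import Mathlib

open scoped BigOperators RealInnerProductSpace
open Classical MeasureTheory

noncomputable section

namespace HO

variable {V : Type*} [NormedAddCommGroup V] [InnerProductSpace ℝ V] [FiniteDimensional ℝ V]

/-- The coroot `α^∨ = 2α/⟨α,α⟩` of a vector `α`. -/
def coroot (α : V) : V := (2 / ⟪α, α⟫) • α

/-- The orthogonal reflection `s_α(v) = v - ⟨α^∨,v⟩ α`. -/
def sRefl (α : V) : V → V := fun v => v - ⟪coroot α, v⟫ • α

/-- Data of an irreducible reduced crystallographic root system `R` in the Euclidean
space `V`, with a fixed basis of simple roots `simple : Fin N → V` and the corresponding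
set of positive roots `Rplus`. -/
structure RootSystemData (V : Type*) [NormedAddCommGroup V] [InnerProductSpace ℝ V]
    [FiniteDimensional ℝ V] (N : ℕ) : Type _ where
  R : Finset V
  Rplus : Finset V
  simple : Fin N → V
  nonzero : ∀ α ∈ R, α ≠ 0
  Rplus_subset : Rplus ⊆ R
  decomp : ∀ α ∈ R, (α ∈ Rplus ∧ -α ∉ Rplus) ∨ (α ∉ Rplus ∧ -α ∈ Rplus)
  simple_mem : ∀ i, simple i ∈ Rplus
  simple_li : LinearIndependent ℝ simple
  simple_span : Submodule.span ℝ (Set.range simple) = ⊤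
  pos_combo : ∀ α ∈ Rplus, ∃ c : Fin N → ℕ, α = ∑ i, (c i : ℝ) • simple i
  reflect_mem : ∀ α ∈ R, ∀ β ∈ R, sRefl α β ∈ R
  crystal : ∀ α ∈ R, ∀ β ∈ R, ∃ n : ℤ, ⟪coroot α, β⟫ = (n : ℝ)
  reduced : ∀ α ∈ R, ∀ c : ℝ, c • α ∈ R → c = 1 ∨ c = -1
  irreducible : ∀ S : Finset V, S ⊆ R → (∀ α ∈ S, ∀ β ∈ R, β ∉ S → ⟪α, β⟫ = 0) →
    S = ∅ ∨ S = R

namespace RootSystemData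

variable {N : ℕ} (Δ : RootSystemData V N)

/-- The Weyl group `W`, generated by the reflections in the roots. -/
def weylGroup : Subgroup (V ≃ₗ[ℝ] V) :=
  Subgroup.closure {g : V ≃ₗ[ℝ] V | ∃ α ∈ Δ.R, ⇑g = sRefl α}

/-- The Weyl orbit `W(μ)` of a weight `μ`. -/
def orbit (μ : V) : Set V := {ν | ∃ w ∈ Δ.weylGroup, w μ = ν}

/-- The weight lattice `P = {μ : ⟨α^∨,μ⟩ ∈ ℤ for all α ∈ R}`. -/
def Pset : Set V := {μ | ∀ α ∈ Δ.R, ∃ n : ℤ, ⟪coroot α, μ⟫ = (n : ℝ)}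

/-- Dominance: `⟨α^∨,μ⟩ ≥ 0` for all positive roots `α`. -/
def IsDominant (μ : V) : Prop := ∀ α ∈ Δ.Rplus, 0 ≤ ⟪coroot α, μ⟫

/-- Membership in the set of dominant weights `P_+`. -/
def IsDomWeight (μ : V) : Prop := μ ∈ Δ.Pset ∧ Δ.IsDominant μ

/-- Half the sum of the positive roots. -/
def rho : V := (1/2 : ℝ) • ∑ α ∈ Δ.Rplus, α

/-- Membership in the regular dominant weights `P_{++} = P_+ + ρ`. -/
def IsRegDomWeight (μ : V) : Prop := ∃ ν : V, Δ.IsDomWeight ν ∧ μ = ν + Δ.rho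

/-- The deformed half-sum `ρ_k = (1/2) Σ_{α ∈ R_+} k_α α`. -/
def rhok (k : V → ℝ) : V := (1/2 : ℝ) • ∑ α ∈ Δ.Rplus, k α • α

/-- `W`-invariance of the multiplicity parameters. -/
def WInvPar {X : Type*} (k : V → X) : Prop :=
  ∀ w ∈ Δ.weylGroup, ∀ α ∈ Δ.R, k (w α) = k α

/-- `R_w^∨` (indexed by the positive roots `α` with `w(α) ∈ -R_+`). -/
def RwD (w : V ≃ₗ[ℝ] V) : Finset V := Δ.Rplus.filter (fun α => -(w α) ∈ Δ.Rplus)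

/-- The length of a Weyl group element, `l(w) = |R_w^∨|`. -/
def len (w : V ≃ₗ[ℝ] V) : ℕ := (Δ.RwD w).card

/-- `w` is a/the shortest Weyl group element with `w(μ⁺) = μ`. -/
def shortestTo (μp μ : V) (w : V ≃ₗ[ℝ] V) : Prop :=
  w ∈ Δ.weylGroup ∧ w μp = μ ∧ ∀ u ∈ Δ.weylGroup, u μp = μ → Δ.len w ≤ Δ.len u

/-- The order `ν ≤ μ` : `μ - ν` is a nonnegative integer combination of simple roots. -/
def le' (ν μ : V) : Prop := ∃ c : Fin N → ℕ, μ - ν = ∑ i, (c i : ℝ) • Δ.simple i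

/-- `μp` is the dominant representative of the Weyl orbit of `μ`. -/
def domRep (μ μp : V) : Prop := Δ.IsDominant μp ∧ μp ∈ Δ.orbit μ

/-- The order `ν ≺ μ`. -/
def prec (ν μ : V) : Prop :=
  ν ≠ μ ∧ ∃ νp μp : V, Δ.domRep ν νp ∧ Δ.domRep μ μp ∧
    ((νp ≠ μp ∧ Δ.le' νp μp) ∨ (νp = μp ∧ Δ.le' ν μ))

/-- `v = ρ_k(μ) = w_μ(ρ_k)` where `w_μ` is the shortest Weyl element with
`w_μ(μ⁺) = μ`, `μ⁺` the dominant representative of the orbit of `μ`. -/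
def IsRhokAt (k : V → ℝ) (μ v : V) : Prop :=
  ∃ (μp : V) (w : V ≃ₗ[ℝ] V), Δ.IsDomWeight μp ∧ Δ.shortestTo μp μ w ∧ v = w (Δ.rhok k)

end RootSystemData

/-- The group algebra `ℂ[V]`, containing `ℂ[P]` as the elements supported on `P`. -/
abbrev GA (V : Type*) [AddCommGroup V] := AddMonoidAlgebra ℂ V

/-- The basis element `x^μ` of the group algebra. -/
def Xp {V : Type*} [AddCommGroup V] (μ : V) : GA V := AddMonoidAlgebra.single μ 1

/-- The action of a map `V → V` (e.g. a Weyl group element or a reflection) on the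
group algebra, `w(x^μ) = x^{w(μ)}`. -/
def actA (w : V → V) : GA V → GA V := fun f => AddMonoidAlgebra.ofCoeff (Finsupp.mapDomain w f.coeff)

/-- The derivation `∂^λ`, with `∂^λ(x^μ) = ⟨λ,μ⟩ x^μ`. -/
def pd (lam : V) (f : GA V) : GA V :=
  f.coeff.sum fun μ c => AddMonoidAlgebra.single μ ((⟪lam, μ⟫ : ℝ) * c)

namespace RootSystemData

variable {N : ℕ} (Δ : RootSystemData V N)

/-- Membership in `ℂ[P] ⊆ ℂ[V]`: the support lies in the weight lattice. -/
def InCP (f : GA V) : Prop := ↑f.coeff.support ⊆ Δ.Pset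

/-- `Dl` is the Dunkl–Cherednik operator `D^λ` on `ℂ[P]`:
`D^λ f = ∂^λ f + Σ_{α∈R_+} k_α ⟨λ,α⟩ (x^α-1)⁻¹(f - s_α f) + ⟨λ,ρ_k⟩ f`, where
`(x^α-1)⁻¹(f - s_α f)` denotes the unique `g` with `(x^α-1)·g = f - s_α f`. -/
def IsDC (k : V → ℝ) (lam : V) (Dl : GA V → GA V) : Prop :=
  ∀ f : GA V, Δ.InCP f →
    ∃ g : V → GA V,
      (∀ α ∈ Δ.Rplus, (Xp α - 1) * g α = f - actA (sRefl α) f) ∧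
      Dl f = pd lam f + ∑ α ∈ Δ.Rplus, ((k α * ⟪lam, α⟫ : ℝ) : ℂ) • g α
        + ((⟪lam, Δ.rhok k⟫ : ℝ) : ℂ) • f

/-- `F` is the nonsymmetric Heckman–Opdam polynomial `F_μ` (relative to the family of
Dunkl–Cherednik operators `D`): it is monic of top term `x^μ`, all lower terms are
`≺ μ`, and it is a joint eigenvector with eigenvalues `⟨λ, μ + ρ_k(μ)⟩`. -/
def IsHO (k : V → ℝ) (D : V → GA V → GA V) (μ : V) (F : GA V) : Prop :=
  Δ.InCP F ∧ F.coeff μ = 1 ∧ (∀ ν ∈ F.coeff.support, ν = μ ∨ Δ.prec ν μ) ∧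
    ∃ v : V, Δ.IsRhokAt k μ v ∧
      ∀ lam : V, D lam F = ((⟪lam, μ + v⟫ : ℝ) : ℂ) • F

/-- The intertwiner `K_i = s_i ∘ D^{α_i^∨} - k_i` (relative to `D`). -/
def Kop (k : V → ℝ) (D : V → GA V → GA V) (i : Fin N) : GA V → GA V :=
  fun f => actA (sRefl (Δ.simple i)) (D (coroot (Δ.simple i)) f)
    - ((k (Δ.simple i) : ℝ) : ℂ) • f

/-- Evaluation of an element of `ℂ[P]` at the point `t` of the torus:
`x^μ(t) = exp(√-1 ⟨t,μ⟩)`. -/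
def evalA (f : GA V) (t : V) : ℂ :=
  f.coeff.sum fun μ c => c * Complex.exp (Complex.I * ((⟪t, μ⟫ : ℝ) : ℂ))

/-- The weight function `Δ_k(t) = ∏_{α∈R} |1 - x^α(t)|^{k_α}`. -/
def weightFn (k : V → ℝ) (t : V) : ℝ :=
  ∏ α ∈ Δ.R, ‖(1 - Complex.exp (Complex.I * ((⟪t, α⟫ : ℝ) : ℂ)))‖ ^ (k α)

/-- Coordinates on the torus `T = V/2πQ^∨` via the basis of simple coroots. -/
def coordMap (t : Fin N → ℝ) : V := ∑ i, t i • coroot (Δ.simple i)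

/-- The inner product `⟨f,g⟩_k = ∫_T f conj(g) Δ_k dμ` against the normalized Haar
measure of the torus `T = V/2πQ^∨`, computed in the coordinates given by the simple
coroots (each of period `2π`). -/
def ipk (k : V → ℝ) (f g : GA V) : ℂ :=
  (∫ t in Set.pi Set.univ (fun _ : Fin N => Set.Ico (0:ℝ) (2*Real.pi)),
    evalA f (Δ.coordMap t) * (starRingEnd ℂ) (evalA g (Δ.coordMap t)) *
      ((Δ.weightFn k (Δ.coordMap t) : ℝ) : ℂ))
  / (((2*Real.pi) ^ N : ℝ) : ℂ)

end RootSystemData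

end HO

namespace HO

section MacdonaldDev

variable {V : Type*} [NormedAddCommGroup V] [InnerProductSpace ℝ V] [FiniteDimensional ℝ V]

-- chunk 1 --

set_option linter.unusedSectionVars false

lemma inner_self_pos' {α : V} (h : α ≠ 0) : 0 < ⟪α, α⟫ :=
  lt_of_le_of_ne real_inner_self_nonneg
    (fun h0 => h ((inner_self_eq_zero (𝕜 := ℝ)).mp h0.symm))

lemma inner_self_ne' {α : V} (h : α ≠ 0) : ⟪α, α⟫ ≠ 0 :=
  ne_of_gt (inner_self_pos' h)

lemma inner_coroot_left (α v : V) : ⟪coroot α, v⟫ = (2 / ⟪α, α⟫) * ⟪α, v⟫ := by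
  simp [coroot, real_inner_smul_left]

lemma inner_coroot_self {α : V} (h : α ≠ 0) : ⟪coroot α, α⟫ = 2 := by
  rw [inner_coroot_left]
  field_simp [inner_self_ne' h]

lemma sRefl_apply (α v : V) : sRefl α v = v - ⟪coroot α, v⟫ • α := rfl

lemma sRefl_self {α : V} (h : α ≠ 0) : sRefl α α = -α := by
  rw [sRefl_apply, inner_coroot_self h]; module

lemma sRefl_add (α v w : V) : sRefl α (v + w) = sRefl α v + sRefl α w := by
  simp only [sRefl_apply, inner_add_right]; module

lemma sRefl_smul (α : V) (c : ℝ) (v : V) : sRefl α (c • v) = c • sRefl α v := by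
  simp only [sRefl_apply, inner_smul_right]; module

lemma sRefl_neg (α v : V) : sRefl α (-v) = - sRefl α v := by
  simp only [sRefl_apply, inner_neg_right]; module

lemma sRefl_involutive {α : V} (h : α ≠ 0) : Function.Involutive (sRefl α) := by
  intro v
  simp only [sRefl_apply, inner_sub_right, inner_smul_right, inner_coroot_self h]
  module

/-- The reflection as a linear map. -/
def reflLM (α : V) : V →ₗ[ℝ] V where
  toFun := sRefl α
  map_add' := sRefl_add α
  map_smul' := sRefl_smul α

/-- The reflection as a linear equivalence. -/
def reflE (α : V) (h : α ≠ 0) : V ≃ₗ[ℝ] V :=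
  LinearEquiv.ofInvolutive (reflLM α) (sRefl_involutive h)

@[simp] lemma coe_reflE {α : V} (h : α ≠ 0) : ⇑(reflE α h) = sRefl α := rfl

lemma inner_sRefl {α : V} (h : α ≠ 0) (v w : V) : ⟪sRefl α v, sRefl α w⟫ = ⟪v, w⟫ := by
  simp only [sRefl_apply, inner_sub_left, inner_sub_right, inner_smul_left, inner_smul_right,
    inner_coroot_left, real_inner_comm α w, real_inner_comm α v, conj_trivial]
  field_simp [inner_self_ne' h]
  ring

lemma coroot_smul_pos (α : V) {c : ℝ} (hc : 0 < c) : coroot (c • α) = c⁻¹ • coroot α := by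
  simp only [coroot, real_inner_smul_left, inner_smul_right, smul_smul]
  rcases eq_or_ne ⟪α, α⟫ 0 with h | h
  · have hα : α = 0 := (inner_self_eq_zero (𝕜 := ℝ)).mp h
    simp [hα]
  · congr 1
    field_simp

lemma coroot_neg (α : V) : coroot (-α) = - coroot α := by
  simp only [coroot, inner_neg_neg, smul_neg]

lemma coroot_sRefl {α : V} (h : α ≠ 0) (β : V) : coroot (sRefl α β) = sRefl α (coroot β) := by
  have hn : ⟪sRefl α β, sRefl α β⟫ = ⟪β, β⟫ := inner_sRefl h β β
  simp only [coroot, hn, ← sRefl_smul]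



namespace RootSystemData

variable {N : ℕ} (Δ : RootSystemData V N)

-- chunk 2 --

lemma Rplus_nonzero {α : V} (h : α ∈ Δ.Rplus) : α ≠ 0 :=
  Δ.nonzero α (Δ.Rplus_subset h)

lemma simple_mem_R (i : Fin N) : Δ.simple i ∈ Δ.R :=
  Δ.Rplus_subset (Δ.simple_mem i)

lemma simple_ne_zero (i : Fin N) : Δ.simple i ≠ 0 :=
  Δ.nonzero _ (Δ.simple_mem_R i)

lemma neg_mem_R {α : V} (h : α ∈ Δ.R) : -α ∈ Δ.R := by
  have := Δ.reflect_mem α h α h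
  rwa [sRefl_self (Δ.nonzero α h)] at this

lemma mem_R_cases {α : V} (h : α ∈ Δ.R) : α ∈ Δ.Rplus ∨ -α ∈ Δ.Rplus := by
  rcases Δ.decomp α h with ⟨h1, _⟩ | ⟨_, h2⟩
  · exact Or.inl h1
  · exact Or.inr h2

lemma not_neg_mem_Rplus {α : V} (h : α ∈ Δ.Rplus) : -α ∉ Δ.Rplus := by
  rcases Δ.decomp α (Δ.Rplus_subset h) with ⟨_, h2⟩ | ⟨h1, _⟩
  · exact h2
  · exact absurd h h1

/-- Membership in the nonnegative cone spanned by the simple roots. -/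
def InCone (v : V) : Prop := ∃ d : Fin N → ℝ, (∀ j, 0 ≤ d j) ∧ v = ∑ j, d j • Δ.simple j

lemma inCone_Rplus {α : V} (h : α ∈ Δ.Rplus) : Δ.InCone α := by
  obtain ⟨c, hc⟩ := Δ.pos_combo α h
  exact ⟨fun j => (c j : ℝ), fun j => Nat.cast_nonneg _, hc⟩

lemma inCone_add {v w : V} (hv : Δ.InCone v) (hw : Δ.InCone w) : Δ.InCone (v + w) := by
  obtain ⟨d, hd, rfl⟩ := hv; obtain ⟨e, he, rfl⟩ := hw
  exact ⟨d + e, fun j => add_nonneg (hd j) (he j), by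
    simp [add_smul, Finset.sum_add_distrib]⟩

lemma inCone_smul {v : V} {c : ℝ} (hc : 0 ≤ c) (hv : Δ.InCone v) : Δ.InCone (c • v) := by
  obtain ⟨d, hd, rfl⟩ := hv
  exact ⟨fun j => c * d j, fun j => mul_nonneg hc (hd j), by
    simp [Finset.smul_sum, mul_smul]⟩

lemma inCone_zero : Δ.InCone 0 :=
  ⟨fun _ => 0, fun _ => le_refl _, by simp⟩

lemma inCone_sum {ι : Type*} {s : Finset ι} {f : ι → V} (h : ∀ i ∈ s, Δ.InCone (f i)) :
    Δ.InCone (∑ i ∈ s, f i) := by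
  classical
  induction s using Finset.induction_on with
  | empty => simpa using Δ.inCone_zero
  | insert _ _ hx ih =>
    rw [Finset.sum_insert hx]
    exact Δ.inCone_add (h _ (Finset.mem_insert_self _ _))
      (ih fun i hi => h i (Finset.mem_insert_of_mem hi))

lemma inCone_coroot {α : V} (h : α ∈ Δ.Rplus) : Δ.InCone (coroot α) := by
  have h2 : (0:ℝ) ≤ 2 / ⟪α, α⟫ :=
    le_of_lt (div_pos two_pos (inner_self_pos' (Δ.Rplus_nonzero h)))
  exact Δ.inCone_smul h2 (Δ.inCone_Rplus h)

lemma coeffs_eq_zero {d : Fin N → ℝ} (h : ∑ j, d j • Δ.simple j = 0) : ∀ j, d j = 0 := by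
  have := Fintype.linearIndependent_iff.mp Δ.simple_li d h
  exact this

lemma inCone_eq_zero {v : V} (hv : Δ.InCone v) (hv' : Δ.InCone (-v)) : v = 0 := by
  obtain ⟨d, hd, rfl⟩ := hv
  obtain ⟨e, he, hh⟩ := hv'
  have hsum : ∑ j, (d j + e j) • Δ.simple j = 0 := by
    have : ∑ j, d j • Δ.simple j + ∑ j, e j • Δ.simple j = 0 := by
      rw [← hh]; abel
    simpa [add_smul, Finset.sum_add_distrib] using this
  have hz := Δ.coeffs_eq_zero hsum
  have : ∀ j, d j = 0 := fun j => by
    have := hz j; nlinarith [hd j, he j]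
  simp [this]

lemma inner_pos_of_inCone {x v : V} (hx : ∀ j, 0 < ⟪x, Δ.simple j⟫)
    (hv : Δ.InCone v) (hv0 : v ≠ 0) : 0 < ⟪x, v⟫ := by
  obtain ⟨d, hd, rfl⟩ := hv
  rw [inner_sum]
  have hterm : ∀ j, 0 ≤ ⟪x, d j • Δ.simple j⟫ := fun j => by
    rw [real_inner_smul_right]; exact mul_nonneg (hd j) (le_of_lt (hx j))
  have hex : ∃ j, d j ≠ 0 := by
    by_contra hc
    push_neg at hc
    exact hv0 (by simp [hc])
  obtain ⟨j0, hj0⟩ := hex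
  have : 0 < ⟪x, d j0 • Δ.simple j0⟫ := by
    rw [real_inner_smul_right]
    exact mul_pos (lt_of_le_of_ne (hd j0) (Ne.symm hj0)) (hx j0)
  exact Finset.sum_pos' (fun j _ => hterm j) ⟨j0, Finset.mem_univ j0, this⟩

lemma inner_nonneg_of_inCone {x v : V} (hx : ∀ j, 0 ≤ ⟪x, Δ.simple j⟫)
    (hv : Δ.InCone v) : 0 ≤ ⟪x, v⟫ := by
  obtain ⟨d, hd, rfl⟩ := hv
  rw [inner_sum]
  exact Finset.sum_nonneg fun j _ => by
    rw [real_inner_smul_right]; exact mul_nonneg (hd j) (hx j)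

/-- `s_i` maps positive roots other than `α_i` to positive roots other than `α_i`. -/
lemma sRefl_simple_perm (i : Fin N) {β : V} (hβ : β ∈ Δ.Rplus) (hne : β ≠ Δ.simple i) :
    sRefl (Δ.simple i) β ∈ Δ.Rplus ∧ sRefl (Δ.simple i) β ≠ Δ.simple i := by
  set αi := Δ.simple i with hαi
  have hαiR : αi ∈ Δ.R := Δ.simple_mem_R i
  have hβR : β ∈ Δ.R := Δ.Rplus_subset hβ
  have hmem : sRefl αi β ∈ Δ.R := Δ.reflect_mem αi hαiR β hβR
  have hne2 : sRefl αi β ≠ αi := by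
    intro hc
    apply Δ.not_neg_mem_Rplus hβ
    have : β = sRefl αi αi := by
      have := congrArg (sRefl αi) hc
      rwa [sRefl_involutive (Δ.simple_ne_zero i) β] at this
    rw [this, sRefl_self (Δ.simple_ne_zero i)]
    simpa using Δ.simple_mem i
  refine ⟨?_, hne2⟩
  rcases Δ.mem_R_cases hmem with hpos | hneg
  · exact hpos
  · exfalso
    obtain ⟨c, hc⟩ := Δ.pos_combo β hβ
    obtain ⟨e, he⟩ := Δ.pos_combo _ hneg
    set m := ⟪coroot αi, β⟫ with hm
    have hkey : ∑ j, ((c j : ℝ) + (e j : ℝ) - (if j = i then m else 0)) • Δ.simple j = 0 := by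
      have h1 : sRefl αi β = β - m • αi := rfl
      have h2 : -(sRefl αi β) = ∑ j, (e j : ℝ) • Δ.simple j := he
      have h3 : β - m • αi + ∑ j, (e j : ℝ) • Δ.simple j = 0 := by
        rw [← h1, ← h2]; abel
      rw [hc] at h3
      rw [← h3]
      rw [Finset.sum_congr rfl (fun j _ => sub_smul _ _ _)]
      rw [Finset.sum_sub_distrib]
      rw [Finset.sum_congr rfl (fun j _ => add_smul (c j : ℝ) (e j : ℝ) _)]
      rw [Finset.sum_add_distrib]
      have : ∑ j, (if j = i then m else 0) • Δ.simple j = m • αi := by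
        rw [Finset.sum_eq_single i (fun b _ hb => by simp [hb])
          (fun hc' => absurd (Finset.mem_univ i) hc')]
        simp [hαi]
      rw [this]
      abel
    have hz := Δ.coeffs_eq_zero hkey
    have hcj : ∀ j, j ≠ i → (c j : ℝ) = 0 := by
      intro j hj
      have := hz j
      simp only [if_neg hj] at this
      have : (c j : ℝ) + (e j : ℝ) = 0 := by linarith
      nlinarith [Nat.cast_nonneg (α := ℝ) (c j), Nat.cast_nonneg (α := ℝ) (e j)]
    have hβeq : β = (c i : ℝ) • αi := by
      rw [hc, Finset.sum_eq_single i (fun b _ hb => by simp [hcj b hb])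
        (fun hc' => absurd (Finset.mem_univ i) hc')]
    rcases Δ.reduced αi hαiR (c i : ℝ) (hβeq ▸ hβR) with h1 | h1
    · exact hne (by rw [hβeq, h1, one_smul])
    · have : (0:ℝ) ≤ (c i : ℝ) := Nat.cast_nonneg _
      rw [h1] at this; linarith


-- chunk 3 --

lemma mul_apply' (w u : V ≃ₗ[ℝ] V) (v : V) : (w * u) v = w (u v) := rfl

lemma reflE_mem {α : V} (hα : α ∈ Δ.R) :
    reflE α (Δ.nonzero α hα) ∈ Δ.weylGroup :=
  Subgroup.subset_closure ⟨α, hα, rfl⟩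

lemma weyl_mem_R_iff {w : V ≃ₗ[ℝ] V} (hw : w ∈ Δ.weylGroup) (α : V) :
    α ∈ Δ.R ↔ w α ∈ Δ.R := by
  induction hw using Subgroup.closure_induction generalizing α with
  | mem g hg =>
    obtain ⟨α₀, hα₀, hgeq⟩ := hg
    rw [hgeq]
    constructor
    · intro h; exact Δ.reflect_mem α₀ hα₀ α h
    · intro h
      have := Δ.reflect_mem α₀ hα₀ _ h
      rwa [sRefl_involutive (Δ.nonzero α₀ hα₀) α] at this
  | one => simp
  | mul g g' _ _ ihg ihg' =>
    have : (g * g') α = g (g' α) := rfl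
    rw [this]
    exact (ihg' α).trans (ihg (g' α))
  | inv g _ ihg =>
    have hgg : g (g⁻¹ α) = α := by
      change (g * g⁻¹) α = α
      simp
    constructor
    · intro h
      refine (ihg (g⁻¹ α)).mpr ?_
      rwa [hgg]
    · intro h
      have := (ihg (g⁻¹ α)).mp h
      rwa [hgg] at this

lemma weyl_mem_R {w : V ≃ₗ[ℝ] V} (hw : w ∈ Δ.weylGroup) {α : V} (hα : α ∈ Δ.R) :
    w α ∈ Δ.R := (Δ.weyl_mem_R_iff hw α).mp hα

/-- The simple reflection as element of the Weyl group. -/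
def SiE (i : Fin N) : V ≃ₗ[ℝ] V := reflE (Δ.simple i) (Δ.simple_ne_zero i)

@[simp] lemma coe_SiE (i : Fin N) : ⇑(Δ.SiE i) = sRefl (Δ.simple i) := rfl

lemma SiE_mem (i : Fin N) : Δ.SiE i ∈ Δ.weylGroup :=
  Subgroup.subset_closure ⟨Δ.simple i, Δ.simple_mem_R i, rfl⟩

lemma mem_RwD_iff {w : V ≃ₗ[ℝ] V} {α : V} :
    α ∈ Δ.RwD w ↔ α ∈ Δ.Rplus ∧ -(w α) ∈ Δ.Rplus := Finset.mem_filter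

lemma RwD_mul_SiE {w : V ≃ₗ[ℝ] V} (i : Fin N) (hpos : w (Δ.simple i) ∈ Δ.Rplus) :
    Δ.RwD (w * Δ.SiE i) = insert (Δ.simple i) ((Δ.RwD w).image (sRefl (Δ.simple i))) := by
  set αi := Δ.simple i with hαi
  ext β
  simp only [mem_RwD_iff, Finset.mem_insert, Finset.mem_image]
  constructor
  · rintro ⟨hβ, hneg⟩
    rcases eq_or_ne β αi with h | h
    · exact Or.inl h
    · refine Or.inr ⟨sRefl αi β, ?_, sRefl_involutive (Δ.simple_ne_zero i) β⟩
      exact ⟨(Δ.sRefl_simple_perm i hβ h).1, hneg⟩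
  · rintro (rfl | ⟨γ, hγ, rfl⟩)
    · refine ⟨Δ.simple_mem i, ?_⟩
      have h1 : -((w * Δ.SiE i) αi) = w αi := by
        show -(w (sRefl αi αi)) = w αi
        rw [sRefl_self (Δ.simple_ne_zero i), map_neg, neg_neg]
      rw [h1]
      exact hpos
    · obtain ⟨hγp, hγn⟩ := hγ
      have hγne : γ ≠ αi := fun hh => Δ.not_neg_mem_Rplus hpos (hh ▸ hγn)
      refine ⟨(Δ.sRefl_simple_perm i hγp hγne).1, ?_⟩
      have h2 : (w * Δ.SiE i) (sRefl αi γ) = w γ := by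
        show w (sRefl αi (sRefl αi γ)) = w γ
        rw [sRefl_involutive (Δ.simple_ne_zero i) γ]
      rw [h2]
      exact hγn

lemma card_RwD_mul_SiE {w : V ≃ₗ[ℝ] V} (i : Fin N) (hpos : w (Δ.simple i) ∈ Δ.Rplus) :
    (Δ.RwD (w * Δ.SiE i)).card = (Δ.RwD w).card + 1 := by
  rw [Δ.RwD_mul_SiE i hpos]
  have hnotmem : Δ.simple i ∉ (Δ.RwD w).image (sRefl (Δ.simple i)) := by
    intro hc
    obtain ⟨γ, hγ, hγeq⟩ := Finset.mem_image.mp hc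
    have h5 := congrArg (sRefl (Δ.simple i)) hγeq
    rw [sRefl_involutive (Δ.simple_ne_zero i) γ, sRefl_self (Δ.simple_ne_zero i)] at h5
    rw [mem_RwD_iff] at hγ
    rw [h5] at hγ
    exact Δ.not_neg_mem_Rplus (Δ.simple_mem i) (by simpa using hγ.1)
  rw [Finset.card_insert_of_notMem hnotmem,
    Finset.card_image_of_injective _ (sRefl_involutive (Δ.simple_ne_zero i)).injective]

lemma RwD_eq_Rplus {w : V ≃ₗ[ℝ] V} (hw : w ∈ Δ.weylGroup)
    (h : ∀ i, -(w (Δ.simple i)) ∈ Δ.Rplus) : Δ.RwD w = Δ.Rplus := by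
  apply Finset.filter_true_of_mem
  intro α hα
  have hαR : α ∈ Δ.R := Δ.Rplus_subset hα
  have hwα : w α ∈ Δ.R := Δ.weyl_mem_R hw hαR
  have hcone : Δ.InCone (-(w α)) := by
    obtain ⟨c, hc⟩ := Δ.pos_combo α hα
    have : -(w α) = ∑ j, (c j : ℝ) • (-(w (Δ.simple j))) := by
      rw [hc, map_sum]
      simp only [_root_.map_smul]
      rw [← Finset.sum_neg_distrib]
      congr 1
      ext j
      rw [smul_neg]
    rw [this]
    exact Δ.inCone_sum fun j _ => Δ.inCone_smul (Nat.cast_nonneg _)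
      (Δ.inCone_Rplus (h j))
  rcases Δ.mem_R_cases hwα with hp | hn
  · exfalso
    have : w α = 0 := Δ.inCone_eq_zero (Δ.inCone_Rplus hp) hcone
    exact Δ.nonzero _ hwα this
  · exact hn

lemma exists_w0 (WF : Finset (V ≃ₗ[ℝ] V)) (hWF : ↑WF = (Δ.weylGroup : Set (V ≃ₗ[ℝ] V))) :
    ∃ w0 ∈ WF, Δ.RwD w0 = Δ.Rplus := by
  have hmem : ∀ g : V ≃ₗ[ℝ] V, g ∈ WF ↔ g ∈ Δ.weylGroup := by
    intro g
    rw [← Finset.mem_coe, hWF]; rfl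
  have hne : WF.Nonempty := ⟨1, (hmem 1).mpr (one_mem _)⟩
  obtain ⟨w0, hw0WF, hmax⟩ := WF.exists_max_image (fun w => (Δ.RwD w).card) hne
  refine ⟨w0, hw0WF, ?_⟩
  have hw0W : w0 ∈ Δ.weylGroup := (hmem w0).mp hw0WF
  by_cases hcase : ∀ i, -(w0 (Δ.simple i)) ∈ Δ.Rplus
  · exact Δ.RwD_eq_Rplus hw0W hcase
  · exfalso
    push_neg at hcase
    obtain ⟨i, hi⟩ := hcase
    have hwαR : w0 (Δ.simple i) ∈ Δ.R := Δ.weyl_mem_R hw0W (Δ.simple_mem_R i)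
    have hpos : w0 (Δ.simple i) ∈ Δ.Rplus := by
      rcases Δ.mem_R_cases hwαR with hp | hn
      · exact hp
      · exact absurd hn hi
    have hmem2 : w0 * Δ.SiE i ∈ WF := (hmem _).mpr (mul_mem hw0W (Δ.SiE_mem i))
    have := hmax _ hmem2
    rw [Δ.card_RwD_mul_SiE i hpos] at this
    omega

lemma RwD_w0_mul {w0 w : V ≃ₗ[ℝ] V} (hw0 : Δ.RwD w0 = Δ.Rplus)
    (hw : w ∈ Δ.weylGroup) : Δ.RwD (w0 * w) = Δ.Rplus \ Δ.RwD w := by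
  have hw0p : ∀ γ ∈ Δ.Rplus, -(w0 γ) ∈ Δ.Rplus := by
    intro γ hγ
    have : γ ∈ Δ.RwD w0 := hw0 ▸ hγ
    exact (Δ.mem_RwD_iff.mp this).2
  ext β
  simp only [mem_RwD_iff, Finset.mem_sdiff]
  constructor
  · rintro ⟨hβ, hneg⟩
    refine ⟨hβ, ?_⟩
    rintro ⟨-, hwβ⟩
    have h2 : -(w0 (-(w β))) ∈ Δ.Rplus := hw0p _ hwβ
    rw [map_neg, neg_neg] at h2
    have : (w0 * w) β = w0 (w β) := rfl
    rw [this] at hneg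
    exact Δ.not_neg_mem_Rplus h2 hneg
  · rintro ⟨hβ, hnot⟩
    refine ⟨hβ, ?_⟩
    have hβR : β ∈ Δ.R := Δ.Rplus_subset hβ
    have hwβR : w β ∈ Δ.R := Δ.weyl_mem_R hw hβR
    have hwβp : w β ∈ Δ.Rplus := by
      rcases Δ.mem_R_cases hwβR with hp | hn
      · exact hp
      · exact absurd (⟨hβ, hn⟩ : _ ∧ _) hnot
    have : (w0 * w) β = w0 (w β) := rfl
    rw [this]
    exact hw0p _ hwβp

/-- `ρ^∨`, half the sum of the positive coroots. -/
def rv : V := (2:ℝ)⁻¹ • ∑ α ∈ Δ.Rplus, coroot α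

lemma sum_coroot_sRefl (i : Fin N) :
    ∑ α ∈ Δ.Rplus, coroot (sRefl (Δ.simple i) α)
      = (∑ α ∈ Δ.Rplus, coroot α) - (2:ℝ) • coroot (Δ.simple i) := by
  set αi := Δ.simple i with hαi
  have hmem : αi ∈ Δ.Rplus := Δ.simple_mem i
  have hsplit : ∀ g : V → V, ∑ α ∈ Δ.Rplus, g α = g αi + ∑ α ∈ Δ.Rplus.erase αi, g α :=
    fun g => (Finset.add_sum_erase _ g hmem).symm
  rw [hsplit, hsplit (fun α => coroot α)]
  have hrest : ∑ α ∈ Δ.Rplus.erase αi, coroot (sRefl αi α)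
      = ∑ α ∈ Δ.Rplus.erase αi, coroot α := by
    apply Finset.sum_nbij' (fun α => sRefl αi α) (fun α => sRefl αi α)
    · intro a ha
      rw [Finset.mem_erase] at ha ⊢
      have := Δ.sRefl_simple_perm i ha.2 ha.1
      exact ⟨this.2, this.1⟩
    · intro a ha
      rw [Finset.mem_erase] at ha ⊢
      have := Δ.sRefl_simple_perm i ha.2 ha.1
      exact ⟨this.2, this.1⟩
    · intro a _; exact sRefl_involutive (Δ.simple_ne_zero i) a
    · intro a _; exact sRefl_involutive (Δ.simple_ne_zero i) a
    · intro a _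
      rfl
  rw [hrest, sRefl_self (Δ.simple_ne_zero i), coroot_neg]
  module

lemma sRefl_rv (i : Fin N) :
    sRefl (Δ.simple i) Δ.rv = Δ.rv - coroot (Δ.simple i) := by
  have hlin : sRefl (Δ.simple i) Δ.rv
      = (2:ℝ)⁻¹ • ∑ α ∈ Δ.Rplus, sRefl (Δ.simple i) (coroot α) := by
    rw [rv, sRefl_smul]
    congr 1
    exact map_sum (reflLM (Δ.simple i)) _ _
  rw [hlin]
  have : ∀ α ∈ Δ.Rplus, sRefl (Δ.simple i) (coroot α) = coroot (sRefl (Δ.simple i) α) :=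
    fun α _ => (coroot_sRefl (Δ.simple_ne_zero i) α).symm
  rw [Finset.sum_congr rfl this, Δ.sum_coroot_sRefl i, rv]
  module

lemma inner_simple_rv (i : Fin N) : ⟪Δ.simple i, Δ.rv⟫ = 1 := by
  have h1 := Δ.sRefl_rv i
  rw [sRefl_apply] at h1
  have h2 : ⟪coroot (Δ.simple i), Δ.rv⟫ • Δ.simple i = coroot (Δ.simple i) := by
    have := sub_right_injective h1
    linear_combination (norm := module) this
  have hne := inner_self_ne' (Δ.simple_ne_zero i)
  have h3 : ⟪coroot (Δ.simple i), Δ.rv⟫ = 2 / ⟪Δ.simple i, Δ.simple i⟫ := by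
    have h4 : (⟪coroot (Δ.simple i), Δ.rv⟫ - 2 / ⟪Δ.simple i, Δ.simple i⟫) • Δ.simple i = 0 := by
      rw [sub_smul, h2, coroot]
      abel
    rcases smul_eq_zero.mp h4 with h | h
    · linarith [sub_eq_zero.mp (by linarith [h] : ⟪coroot (Δ.simple i), Δ.rv⟫ - 2 / ⟪Δ.simple i, Δ.simple i⟫ = 0)]
    · exact absurd h (Δ.simple_ne_zero i)
  rw [inner_coroot_left] at h3
  field_simp at h3
  nlinarith [inner_self_pos' (Δ.simple_ne_zero i), h3]

lemma inner_simple_coroot_int (i : Fin N) {β : V} (hβ : β ∈ Δ.R) :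
    ∃ n : ℤ, ⟪Δ.simple i, coroot β⟫ = (n : ℝ) := by
  obtain ⟨n, hn⟩ := Δ.crystal β hβ (Δ.simple i) (Δ.simple_mem_R i)
  exact ⟨n, by rwa [real_inner_comm]⟩

/-- KEY LEMMA: if `σ(T) - ρ^∨` is strictly dominant then `T = R_+`. -/
theorem Cstar {T : Finset V} (hT : T ⊆ Δ.Rplus)
    (hdom : ∀ i, 0 < ⟪Δ.simple i, (∑ α ∈ T, coroot α) - Δ.rv⟫) : T = Δ.Rplus := by
  set σT := ∑ α ∈ T, coroot α with hσT
  set U := Δ.Rplus \ T with hU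
  have hsum : (∑ α ∈ U, coroot α) + σT = ∑ α ∈ Δ.Rplus, coroot α := Finset.sum_sdiff hT
  set σU := ∑ α ∈ U, coroot α with hσU
  -- integrality
  have hint : ∀ i : Fin N, ∃ n : ℤ, ⟪Δ.simple i, σT⟫ = (n : ℝ) := by
    intro i
    have : ∀ α ∈ T, ∃ n : ℤ, ⟪Δ.simple i, coroot α⟫ = (n : ℝ) :=
      fun α hα => Δ.inner_simple_coroot_int i (Δ.Rplus_subset (hT hα))
    choose f hf using this
    refine ⟨∑ α ∈ T.attach, f α.1 α.2, ?_⟩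
    rw [hσT, inner_sum, ← Finset.sum_attach T (fun α => ⟪Δ.simple i, coroot α⟫)]
    push_cast
    exact Finset.sum_congr rfl fun α _ => hf α.1 α.2
  -- each simple pairing with σU is ≤ 0
  have hUneg : ∀ i : Fin N, ⟪Δ.simple i, σU⟫ ≤ 0 := by
    intro i
    obtain ⟨n, hn⟩ := hint i
    have h1 : 0 < (n : ℝ) - 1 := by
      have := hdom i
      rwa [inner_sub_right, hn, Δ.inner_simple_rv i] at this
    have h2 : (2 : ℤ) ≤ n := by
      have : (1:ℝ) < (n:ℝ) := by linarith
      exact_mod_cast (by exact_mod_cast this : (1:ℤ) < n)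
    have h3 : ⟪Δ.simple i, σU⟫ = 2 - (n:ℝ) := by
      have h4 : ⟪Δ.simple i, σU⟫ + ⟪Δ.simple i, σT⟫ = ⟪Δ.simple i, (2:ℝ) • Δ.rv⟫ := by
        rw [← inner_add_right, hsum, rv]
        congr 1
        module
      rw [hn, real_inner_smul_right, Δ.inner_simple_rv i] at h4
      linarith
    rw [h3]
    have : (2:ℝ) ≤ (n:ℝ) := by exact_mod_cast h2
    linarith
  -- σU = 0
  have hσU0 : σU = 0 := by
    have hcone : Δ.InCone σU := Δ.inCone_sum fun α hα =>
      Δ.inCone_coroot (Finset.mem_sdiff.mp hα).1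
    have hx : ∀ j, 0 ≤ ⟪-σU, Δ.simple j⟫ := by
      intro j
      rw [inner_neg_left, real_inner_comm]
      linarith [hUneg j]
    have := Δ.inner_nonneg_of_inCone hx hcone
    rw [inner_neg_left] at this
    have hle : ⟪σU, σU⟫ ≤ 0 := by linarith
    exact (inner_self_eq_zero (𝕜 := ℝ)).mp (le_antisymm hle real_inner_self_nonneg)
  -- U = ∅
  have hUempty : U = ∅ := by
    by_contra hc
    obtain ⟨α0, hα0⟩ := Finset.nonempty_of_ne_empty hc
    set x := σT - Δ.rv with hx
    have hxj : ∀ j, 0 < ⟪x, Δ.simple j⟫ := by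
      intro j
      rw [real_inner_comm]
      exact hdom j
    have hpos : 0 < ⟪x, σU⟫ := by
      rw [hσU, inner_sum]
      have hterm : ∀ α ∈ U, 0 < ⟪x, coroot α⟫ := by
        intro α hα
        have hαp : α ∈ Δ.Rplus := (Finset.mem_sdiff.mp hα).1
        have hα0' : coroot α ≠ 0 := by
          rw [coroot]
          intro hcc
          rcases smul_eq_zero.mp hcc with h | h
          · have := inner_self_ne' (Δ.Rplus_nonzero hαp)
            rw [div_eq_zero_iff] at h
            rcases h with h | h
            · norm_num at h
            · exact this h
          · exact Δ.Rplus_nonzero hαp h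
        exact Δ.inner_pos_of_inCone hxj (Δ.inCone_coroot hαp) hα0'
      exact Finset.sum_pos hterm ⟨α0, hα0⟩
    rw [hσU0] at hpos
    simp at hpos
  rw [hU, Finset.sdiff_eq_empty_iff_subset] at hUempty
  exact Finset.Subset.antisymm hT hUempty


end RootSystemData

-- chunk 4: expansion machinery --

lemma prod_single' {ι : Type*} (S : Finset ι) (g : ι → V) (c : ι → ℂ) :
    ∏ a ∈ S, (AddMonoidAlgebra.single (g a) (c a) : GA V) =
      AddMonoidAlgebra.single (∑ a ∈ S, g a) (∏ a ∈ S, c a) := by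
  classical
  induction S using Finset.induction_on with
  | empty => simp [AddMonoidAlgebra.one_def]
  | insert _ _ hx ih =>
    rw [Finset.prod_insert hx, Finset.prod_insert hx, Finset.sum_insert hx, ih,
      AddMonoidAlgebra.single_mul_single]

lemma expand_prod (T : Finset V) (y x : V → ℂ) :
    ∏ α ∈ T, ((AddMonoidAlgebra.single (coroot α) (y α) : GA V) + AddMonoidAlgebra.single 0 (x α)) =
      ∑ S ∈ T.powerset, AddMonoidAlgebra.single (∑ α ∈ S, coroot α)
        ((∏ α ∈ S, y α) * ∏ α ∈ T \ S, x α) := by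
  classical
  rw [Finset.prod_add]
  refine Finset.sum_congr rfl fun S _ => ?_
  rw [prod_single', prod_single', AddMonoidAlgebra.single_mul_single]
  simp

lemma expand_apply (T : Finset V) (c : Finset V → ℂ) (γ : V) :
    (∑ S ∈ T.powerset, AddMonoidAlgebra.single (∑ α ∈ S, coroot α) (c S) : GA V).coeff γ =
      ∑ S ∈ T.powerset.filter (fun S => ∑ α ∈ S, coroot α = γ), c S := by
  classical
  rw [AddMonoidAlgebra.coeff_sum, Finset.sum_apply']
  rw [Finset.sum_filter]
  refine Finset.sum_congr rfl fun S _ => ?_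
  rw [AddMonoidAlgebra.coeff_single, Finsupp.single_apply]

namespace RootSystemData

variable {N : ℕ} (Δ : RootSystemData V N)

def twoRho : V := ∑ α ∈ Δ.Rplus, coroot α

lemma twoRho_eq : Δ.twoRho = (2:ℝ) • Δ.rv := by
  rw [rv, twoRho]
  module

lemma sigma_eq_twoRho {S : Finset V} (hS : S ⊆ Δ.Rplus)
    (h : ∑ α ∈ S, coroot α = Δ.twoRho) : S = Δ.Rplus := by
  apply Δ.Cstar hS
  intro i
  rw [h, twoRho_eq]
  have : (2:ℝ) • Δ.rv - Δ.rv = Δ.rv := by module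
  rw [this, Δ.inner_simple_rv i]
  norm_num

/-- The per-`w` product in the group algebra. -/
def Fw (t : V → ℂ) (w : V ≃ₗ[ℝ] V) : GA V :=
  ∏ α ∈ Δ.Rplus,
    ((AddMonoidAlgebra.single (coroot α) (if -(w α) ∈ Δ.Rplus then (-1:ℂ) else -(t α)) : GA V)
      + AddMonoidAlgebra.single 0 (if -(w α) ∈ Δ.Rplus then t α else 1))

/-- The `t`-free product `∏ (X^{α^∨} · (-1) + 1)`. -/
def P1 : GA V := ∏ α ∈ Δ.Rplus,
  ((AddMonoidAlgebra.single (coroot α) (-1:ℂ) : GA V) + AddMonoidAlgebra.single 0 1)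

lemma Fw_coeff_of_ne (t : V → ℂ) (w : V ≃ₗ[ℝ] V) (γ : V)
    (h : ∀ S ∈ Δ.Rplus.powerset, ∑ α ∈ S, coroot α ≠ γ) : (Δ.Fw t w).coeff γ = 0 := by
  rw [Fw, expand_prod, expand_apply]
  rw [Finset.filter_false_of_mem (fun S hS => h S hS)]
  simp

lemma P1_coeff_of_ne (γ : V)
    (h : ∀ S ∈ Δ.Rplus.powerset, ∑ α ∈ S, coroot α ≠ γ) : Δ.P1.coeff γ = 0 := by
  have : Δ.P1 = ∏ α ∈ Δ.Rplus,
      ((AddMonoidAlgebra.single (coroot α) ((fun _ => (-1:ℂ)) α) : GA V)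
        + AddMonoidAlgebra.single 0 ((fun _ => (1:ℂ)) α)) := rfl
  rw [this, expand_prod, expand_apply]
  rw [Finset.filter_false_of_mem (fun S hS => h S hS)]
  simp

lemma filter_sigma_twoRho :
    Δ.Rplus.powerset.filter (fun S => ∑ α ∈ S, coroot α = Δ.twoRho) = {Δ.Rplus} := by
  ext S
  simp only [Finset.mem_filter, Finset.mem_powerset, Finset.mem_singleton]
  constructor
  · rintro ⟨h1, h2⟩
    exact Δ.sigma_eq_twoRho h1 h2
  · rintro rfl
    exact ⟨le_refl _, rfl⟩

lemma Fw_coeff_twoRho (t : V → ℂ) (w : V ≃ₗ[ℝ] V) :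
    (Δ.Fw t w).coeff Δ.twoRho = (-1)^(Δ.Rplus.card) * ∏ α ∈ Δ.Rplus \ Δ.RwD w, t α := by
  rw [Fw, expand_prod, expand_apply, filter_sigma_twoRho, Finset.sum_singleton,
    Finset.sdiff_self, Finset.prod_empty, mul_one]
  have : ∀ α ∈ Δ.Rplus, (if -(w α) ∈ Δ.Rplus then (-1:ℂ) else -(t α))
      = (-1) * (if -(w α) ∈ Δ.Rplus then (1:ℂ) else t α) := by
    intro α _
    by_cases h : -(w α) ∈ Δ.Rplus <;> simp [h]
  rw [Finset.prod_congr rfl this, Finset.prod_mul_distrib, Finset.prod_const]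
  congr 1
  rw [Finset.prod_ite, Finset.prod_const_one, one_mul]
  congr 1
  rw [RwD, ← Finset.filter_not]

lemma P1_coeff_twoRho : Δ.P1.coeff Δ.twoRho = (-1)^(Δ.Rplus.card) := by
  have : Δ.P1 = ∏ α ∈ Δ.Rplus,
      ((AddMonoidAlgebra.single (coroot α) ((fun _ => (-1:ℂ)) α) : GA V)
        + AddMonoidAlgebra.single 0 ((fun _ => (1:ℂ)) α)) := rfl
  rw [this, expand_prod, expand_apply, filter_sigma_twoRho, Finset.sum_singleton]
  simp


-- chunk 5: the functional equation and the vanishing argument --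

lemma sRefl_zero (α : V) : sRefl α 0 = 0 := by
  simp [sRefl_apply]

lemma SiE_sq (i : Fin N) : Δ.SiE i * Δ.SiE i = 1 := by
  apply LinearEquiv.ext
  intro v
  exact sRefl_involutive (Δ.simple_ne_zero i) v

/-- Action of the simple reflection on the group algebra, as a ring homomorphism. -/
def actS (i : Fin N) : GA V →+* GA V :=
  AddMonoidAlgebra.mapDomainRingHom ℂ (Δ.SiE i).toLinearMap

lemma actS_single (i : Fin N) (γ : V) (c : ℂ) :
    Δ.actS i (AddMonoidAlgebra.single γ c) =
      AddMonoidAlgebra.single (sRefl (Δ.simple i) γ) c := by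
  show AddMonoidAlgebra.mapDomain _ _ = _
  rw [AddMonoidAlgebra.mapDomain_single]
  rfl

lemma actS_apply (i : Fin N) (f : GA V) (γ : V) :
    (Δ.actS i f).coeff (sRefl (Δ.simple i) γ) = f.coeff γ := by
  show (Finsupp.mapDomain ⇑(Δ.SiE i).toLinearMap f.coeff) ((Δ.SiE i).toLinearMap γ) = f.coeff γ
  exact Finsupp.mapDomain_apply (sRefl_involutive (Δ.simple_ne_zero i)).injective f.coeff γ

lemma actS_actS (i : Fin N) (f : GA V) : Δ.actS i (Δ.actS i f) = f := by
  apply AddMonoidAlgebra.coeff_injective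
  show Finsupp.mapDomain _ (Finsupp.mapDomain _ f.coeff) = f.coeff
  rw [← Finsupp.mapDomain_comp]
  have : ⇑((Δ.SiE i).toLinearMap : V →+ V) ∘ ⇑((Δ.SiE i).toLinearMap : V →+ V) = id :=
    funext fun v => sRefl_involutive (Δ.simple_ne_zero i) v
  rw [this, Finsupp.mapDomain_id]

lemma actS_Fw_pos (t : V → ℂ) (ht : Δ.WInvPar t) (i : Fin N) {w : V ≃ₗ[ℝ] V}
    (hpos : w (Δ.simple i) ∈ Δ.Rplus) :
    Δ.actS i (Δ.Fw t w) =
      -(AddMonoidAlgebra.single (-(coroot (Δ.simple i))) 1 : GA V)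
        * Δ.Fw t (w * Δ.SiE i) := by
  set αi := Δ.simple i with hαi
  have hz : αi ≠ 0 := Δ.simple_ne_zero i
  have htS : ∀ β ∈ Δ.R, t (sRefl αi β) = t β :=
    fun β hβ => ht (Δ.SiE i) (Δ.SiE_mem i) β hβ
  rw [Fw, map_prod]
  have hfac : ∀ α ∈ Δ.Rplus,
      Δ.actS i ((AddMonoidAlgebra.single (coroot α)
          (if -(w α) ∈ Δ.Rplus then (-1:ℂ) else -(t α)) : GA V)
        + AddMonoidAlgebra.single 0 (if -(w α) ∈ Δ.Rplus then t α else 1))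
      = (AddMonoidAlgebra.single (coroot (sRefl αi α))
          (if -(w α) ∈ Δ.Rplus then (-1:ℂ) else -(t α)) : GA V)
        + AddMonoidAlgebra.single 0 (if -(w α) ∈ Δ.Rplus then t α else 1) := by
    intro α _
    rw [map_add, Δ.actS_single, Δ.actS_single, sRefl_zero, coroot_sRefl hz]
  rw [Finset.prod_congr rfl hfac]
  rw [← Finset.mul_prod_erase _ _ (Δ.simple_mem i)]
  conv_rhs => rw [Fw, ← Finset.mul_prod_erase _ _ (Δ.simple_mem i)]
  have herase : ∏ α ∈ Δ.Rplus.erase αi,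
      ((AddMonoidAlgebra.single (coroot (sRefl αi α))
          (if -(w α) ∈ Δ.Rplus then (-1:ℂ) else -(t α)) : GA V)
        + AddMonoidAlgebra.single 0 (if -(w α) ∈ Δ.Rplus then t α else 1))
      = ∏ α ∈ Δ.Rplus.erase αi,
      ((AddMonoidAlgebra.single (coroot α)
          (if -((w * Δ.SiE i) α) ∈ Δ.Rplus then (-1:ℂ) else -(t α)) : GA V)
        + AddMonoidAlgebra.single 0 (if -((w * Δ.SiE i) α) ∈ Δ.Rplus then t α else 1)) := by
    apply Finset.prod_nbij' (fun α => sRefl αi α) (fun α => sRefl αi α)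
    · intro a ha
      rw [Finset.mem_erase] at ha ⊢
      have := Δ.sRefl_simple_perm i ha.2 ha.1
      exact ⟨this.2, this.1⟩
    · intro a ha
      rw [Finset.mem_erase] at ha ⊢
      have := Δ.sRefl_simple_perm i ha.2 ha.1
      exact ⟨this.2, this.1⟩
    · intro a _; exact sRefl_involutive hz a
    · intro a _; exact sRefl_involutive hz a
    · intro a ha
      rw [Finset.mem_erase] at ha
      have h1 : t (sRefl αi a) = t a := htS a (Δ.Rplus_subset ha.2)
      have h2 : sRefl αi (sRefl αi a) = a := sRefl_involutive hz a
      have h3 : -((w * Δ.SiE i) (sRefl αi a)) = -(w a) := by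
        show -(w (sRefl αi (sRefl αi a))) = -(w a)
        rw [h2]
      rw [h1, h3]
  rw [herase]
  have hGαi : (AddMonoidAlgebra.single (coroot (sRefl αi αi))
          (if -(w αi) ∈ Δ.Rplus then (-1:ℂ) else -(t αi)) : GA V)
        + AddMonoidAlgebra.single 0 (if -(w αi) ∈ Δ.Rplus then t αi else 1)
      = (AddMonoidAlgebra.single (-(coroot αi)) (-(t αi)) : GA V)
        + AddMonoidAlgebra.single 0 1 := by
    rw [sRefl_self hz, coroot_neg, if_neg (Δ.not_neg_mem_Rplus hpos),
      if_neg (Δ.not_neg_mem_Rplus hpos)]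
  have hFαi : (AddMonoidAlgebra.single (coroot αi)
          (if -((w * Δ.SiE i) αi) ∈ Δ.Rplus then (-1:ℂ) else -(t αi)) : GA V)
        + AddMonoidAlgebra.single 0 (if -((w * Δ.SiE i) αi) ∈ Δ.Rplus then t αi else 1)
      = (AddMonoidAlgebra.single (coroot αi) (-1:ℂ) : GA V)
        + AddMonoidAlgebra.single 0 (t αi) := by
    have hcond : -((w * Δ.SiE i) αi) = w αi := by
      show -(w (sRefl αi αi)) = w αi
      rw [sRefl_self hz, map_neg, neg_neg]
    rw [hcond, if_pos hpos, if_pos hpos]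
  rw [hGαi, hFαi]
  rw [← mul_assoc]
  congr 1
  rw [neg_mul, mul_add, AddMonoidAlgebra.single_mul_single,
    AddMonoidAlgebra.single_mul_single, neg_add_cancel, add_zero, one_mul, one_mul,
    neg_add, ← AddMonoidAlgebra.single_neg, ← AddMonoidAlgebra.single_neg, neg_neg]
  abel

lemma actS_Fw (t : V → ℂ) (ht : Δ.WInvPar t) (i : Fin N) {w : V ≃ₗ[ℝ] V}
    (hw : w ∈ Δ.weylGroup) :
    Δ.actS i (Δ.Fw t w) =
      -(AddMonoidAlgebra.single (-(coroot (Δ.simple i))) 1 : GA V)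
        * Δ.Fw t (w * Δ.SiE i) := by
  set αi := Δ.simple i with hαi
  have hz : αi ≠ 0 := Δ.simple_ne_zero i
  have hwR : w αi ∈ Δ.R := Δ.weyl_mem_R hw (Δ.simple_mem_R i)
  rcases Δ.mem_R_cases hwR with hpos | hneg
  · exact Δ.actS_Fw_pos t ht i hpos
  · set w' := w * Δ.SiE i with hw'
    have hpos' : w' αi ∈ Δ.Rplus := by
      have : w' αi = -(w αi) := by
        show w (sRefl αi αi) = -(w αi)
        rw [sRefl_self hz, map_neg]
      rw [this]
      exact hneg
    have hkey := Δ.actS_Fw_pos t ht i hpos'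
    have hw'w : w' * Δ.SiE i = w := by
      rw [hw', mul_assoc, Δ.SiE_sq, mul_one]
    rw [hw'w] at hkey
    have hkey2 : Δ.Fw t w' =
        -(AddMonoidAlgebra.single (coroot αi) 1 : GA V) * Δ.actS i (Δ.Fw t w) := by
      have := congrArg (Δ.actS i) hkey
      rw [Δ.actS_actS, map_mul, map_neg, Δ.actS_single] at this
      rw [this]
      congr 2
      rw [sRefl_neg, ← coroot_sRefl hz, sRefl_self hz, coroot_neg, neg_neg]
    rw [hkey2]
    simp only [neg_mul, mul_neg, neg_neg]
    rw [← mul_assoc, AddMonoidAlgebra.single_mul_single, neg_add_cancel, one_mul,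
      ← AddMonoidAlgebra.one_def, one_mul]

lemma Fw_one (w : V ≃ₗ[ℝ] V) : Δ.Fw (fun _ => (1:ℂ)) w = Δ.P1 := by
  rw [Fw, P1]
  refine Finset.prod_congr rfl fun α _ => ?_
  by_cases h : -(w α) ∈ Δ.Rplus <;> simp [h]

lemma actS_P1 (i : Fin N) :
    Δ.actS i Δ.P1 =
      -(AddMonoidAlgebra.single (-(coroot (Δ.simple i))) 1 : GA V) * Δ.P1 := by
  have h1 : Δ.WInvPar (fun _ => (1:ℂ)) := fun _ _ _ _ => rfl
  have := Δ.actS_Fw (fun _ => (1:ℂ)) h1 i (one_mem _)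
  rwa [Δ.Fw_one, Δ.Fw_one] at this

/-- THE MAIN ALGEBRAIC IDENTITY: `Σ_w F_w = W(t) · P1` in the group algebra. -/
theorem main_alg (t : V → ℂ) (ht : Δ.WInvPar t)
    (WF : Finset (V ≃ₗ[ℝ] V)) (hWF : ↑WF = (Δ.weylGroup : Set (V ≃ₗ[ℝ] V))) :
    ∑ w ∈ WF, Δ.Fw t w =
      (AddMonoidAlgebra.single 0 (∑ w ∈ WF, ∏ α ∈ Δ.RwD w, t α) : GA V) * Δ.P1 := by
  have hmem : ∀ g : V ≃ₗ[ℝ] V, g ∈ WF ↔ g ∈ Δ.weylGroup := by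
    intro g
    rw [← Finset.mem_coe, hWF]; rfl
  set Wt : ℂ := ∑ w ∈ WF, ∏ α ∈ Δ.RwD w, t α with hWt
  set Ψ : GA V := (∑ w ∈ WF, Δ.Fw t w) - (AddMonoidAlgebra.single 0 Wt : GA V) * Δ.P1
    with hΨ
  rw [← sub_eq_zero]
  show Ψ = 0
  by_contra hne
  -- functional equation for Ψ
  have hFE : ∀ i : Fin N, Δ.actS i Ψ =
      -(AddMonoidAlgebra.single (-(coroot (Δ.simple i))) 1 : GA V) * Ψ := by
    intro i
    rw [hΨ, map_sub, map_sum, mul_sub]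
    congr 1
    · rw [Finset.sum_congr rfl (fun w hw => Δ.actS_Fw t ht i ((hmem w).mp hw))]
      rw [← Finset.mul_sum]
      congr 1
      apply Finset.sum_nbij' (fun w => w * Δ.SiE i) (fun w => w * Δ.SiE i)
      · intro a ha
        exact (hmem _).mpr (mul_mem ((hmem a).mp ha) (Δ.SiE_mem i))
      · intro a ha
        exact (hmem _).mpr (mul_mem ((hmem a).mp ha) (Δ.SiE_mem i))
      · intro a _
        rw [mul_assoc, Δ.SiE_sq, mul_one]
      · intro a _
        rw [mul_assoc, Δ.SiE_sq, mul_one]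
      · intro a _
        rfl
    · rw [map_mul, Δ.actS_single, sRefl_zero, Δ.actS_P1]
      ring
  -- coefficient recursion
  have hrel : ∀ (i : Fin N) (γ : V),
      Ψ.coeff γ = -Ψ.coeff (coroot (Δ.simple i) + sRefl (Δ.simple i) γ) := by
    intro i γ
    have h := congrArg (fun f : GA V => f.coeff (sRefl (Δ.simple i) γ)) (hFE i)
    rw [Δ.actS_apply] at h
    rw [h, neg_mul, AddMonoidAlgebra.coeff_neg, Finsupp.neg_apply, AddMonoidAlgebra.coeff_single_mul_apply, one_mul, neg_neg]
  -- shifted antisymmetry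
  have hanti : ∀ (i : Fin N) (η : V),
      Ψ.coeff (sRefl (Δ.simple i) η + Δ.rv) = -Ψ.coeff (η + Δ.rv) := by
    intro i η
    have h := hrel i (η + Δ.rv)
    have harg : coroot (Δ.simple i) + sRefl (Δ.simple i) (η + Δ.rv)
        = sRefl (Δ.simple i) η + Δ.rv := by
      rw [sRefl_add, Δ.sRefl_rv]
      module
    rw [harg] at h
    rw [← neg_neg (Ψ.coeff (sRefl (Δ.simple i) η + Δ.rv)), ← h]
  -- support is contained in the sums of coroots
  have hsupp : ∀ γ ∈ Ψ.coeff.support, ∃ S, S ⊆ Δ.Rplus ∧ ∑ α ∈ S, coroot α = γ := by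
    intro γ hγ
    by_contra hc
    push_neg at hc
    have hzero : Ψ.coeff γ = 0 := by
      have hcc : ∀ S ∈ Δ.Rplus.powerset, ∑ α ∈ S, coroot α ≠ γ :=
        fun S hS => hc S (Finset.mem_powerset.mp hS)
      rw [hΨ, AddMonoidAlgebra.coeff_sub, Finsupp.sub_apply, AddMonoidAlgebra.coeff_sum, Finset.sum_apply',
        Finset.sum_congr rfl (fun w _ => Δ.Fw_coeff_of_ne t w γ hcc),
        AddMonoidAlgebra.coeff_single_mul_apply, neg_zero, zero_add,
        Δ.P1_coeff_of_ne γ hcc]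
      simp
    exact Finsupp.mem_support_iff.mp hγ hzero
  have hnsupp : Ψ.coeff.support.Nonempty := Finsupp.support_nonempty_iff.mpr (by rwa [Ne, AddMonoidAlgebra.coeff_eq_zero])
  obtain ⟨γ₀, hγ₀mem, hγ₀max⟩ := Ψ.coeff.support.exists_max_image (fun γ => ⟪Δ.rv, γ⟫) hnsupp
  set η₀ := γ₀ - Δ.rv with hη₀
  have hγ₀eq : γ₀ = η₀ + Δ.rv := by rw [hη₀]; abel
  have hΨγ₀ : Ψ.coeff γ₀ ≠ 0 := Finsupp.mem_support_iff.mp hγ₀mem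
  have hdom : ∀ i : Fin N, 0 < ⟪Δ.simple i, η₀⟫ := by
    intro i
    have h1 : Ψ.coeff (sRefl (Δ.simple i) η₀ + Δ.rv) = -Ψ.coeff γ₀ := by
      rw [hanti i η₀, ← hγ₀eq]
    have hmem2 : sRefl (Δ.simple i) η₀ + Δ.rv ∈ Ψ.coeff.support := by
      rw [Finsupp.mem_support_iff, h1]
      exact neg_ne_zero.mpr hΨγ₀
    have hle := hγ₀max _ hmem2
    have hrvαi : ⟪Δ.rv, Δ.simple i⟫ = 1 := by
      rw [real_inner_comm]; exact Δ.inner_simple_rv i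
    have hexp : ⟪Δ.rv, sRefl (Δ.simple i) η₀ + Δ.rv⟫
        = ⟪Δ.rv, γ₀⟫ - ⟪coroot (Δ.simple i), η₀⟫ := by
      rw [hγ₀eq, sRefl_apply, inner_add_right, inner_add_right, inner_sub_right,
        real_inner_smul_right, hrvαi]
      ring
    have hc0 : 0 ≤ ⟪coroot (Δ.simple i), η₀⟫ := by
      rw [hexp] at hle
      linarith
    have hcne : ⟪coroot (Δ.simple i), η₀⟫ ≠ 0 := by
      intro hcc
      have hfix : sRefl (Δ.simple i) η₀ = η₀ := by
        rw [sRefl_apply, hcc, zero_smul, sub_zero]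
      rw [hfix, ← hγ₀eq] at h1
      have h4 : Ψ.coeff γ₀ + Ψ.coeff γ₀ = 0 := add_eq_zero_iff_eq_neg.mpr h1
      exact hΨγ₀ (add_self_eq_zero.mp h4)
    have hcpos : 0 < ⟪coroot (Δ.simple i), η₀⟫ := lt_of_le_of_ne hc0 (Ne.symm hcne)
    rw [inner_coroot_left] at hcpos
    have h2 := inner_self_pos' (Δ.simple_ne_zero i)
    have h3 : 0 < 2 / ⟪Δ.simple i, Δ.simple i⟫ := div_pos two_pos h2
    rcases mul_pos_iff.mp hcpos with ⟨-, h4⟩ | ⟨h4, -⟩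
    · exact h4
    · exact absurd h3 (not_lt.mpr (le_of_lt h4))
  obtain ⟨S₀, hS₀sub, hS₀⟩ := hsupp γ₀ hγ₀mem
  have hS₀R : S₀ = Δ.Rplus := by
    apply Δ.Cstar hS₀sub
    intro i
    rw [hS₀]
    exact hdom i
  have hγtwo : γ₀ = Δ.twoRho := by
    rw [← hS₀, hS₀R, twoRho]
  -- the coefficient of `x^{2ρ^∨}` in `Ψ` vanishes
  obtain ⟨w0, hw0WF, hw0⟩ := Δ.exists_w0 WF hWF
  have hbij : ∑ w ∈ WF, ∏ α ∈ Δ.Rplus \ Δ.RwD w, t α = Wt := by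
    rw [Finset.sum_congr rfl (fun w hw => by
      rw [← Δ.RwD_w0_mul hw0 ((hmem w).mp hw)])]
    rw [hWt]
    apply Finset.sum_nbij' (fun w => w0 * w) (fun u => w0⁻¹ * u)
    · intro a ha
      exact (hmem _).mpr (mul_mem ((hmem w0).mp hw0WF) ((hmem a).mp ha))
    · intro a ha
      exact (hmem _).mpr (mul_mem (inv_mem ((hmem w0).mp hw0WF)) ((hmem a).mp ha))
    · intro a _
      rw [← mul_assoc, inv_mul_cancel, one_mul]
    · intro a _
      rw [← mul_assoc, mul_inv_cancel, one_mul]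
    · intro a _
      rfl
  have hzero : Ψ.coeff Δ.twoRho = 0 := by
    rw [hΨ, AddMonoidAlgebra.coeff_sub, Finsupp.sub_apply, AddMonoidAlgebra.coeff_sum, Finset.sum_apply',
      Finset.sum_congr rfl (fun w _ => Δ.Fw_coeff_twoRho t w),
      AddMonoidAlgebra.coeff_single_mul_apply, neg_zero, zero_add, Δ.P1_coeff_twoRho,
      ← Finset.mul_sum, hbij]
    ring
  rw [hγtwo] at hΨγ₀
  exact hΨγ₀ hzero


end RootSystemData

-- chunk 6: evaluation --

/-- The evaluation character `γ ↦ q^{ε⟨γ,λ⟩}` as a monoid homomorphism. -/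
def evMH (q ε : ℝ) (hq : 0 < q) (lam : V) : Multiplicative V →* ℂ where
  toFun := fun γ => (((q ^ (ε * ⟪Multiplicative.toAdd γ, lam⟫) : ℝ)) : ℂ)
  map_one' := by
    show ((q ^ (ε * ⟪(0:V), lam⟫) : ℝ) : ℂ) = 1
    simp [Real.rpow_zero]
  map_mul' := fun x y => by
    show ((q ^ (ε * ⟪Multiplicative.toAdd x + Multiplicative.toAdd y, lam⟫) : ℝ) : ℂ) = _
    rw [inner_add_left, mul_add, Real.rpow_add hq]
    push_cast
    ring

/-- The evaluation algebra homomorphism `ℂ[V] → ℂ`. -/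
def evA' (q ε : ℝ) (hq : 0 < q) (lam : V) : GA V →ₐ[ℂ] ℂ :=
  AddMonoidAlgebra.lift ℂ ℂ V (evMH q ε hq lam)

lemma evA'_single (q ε : ℝ) (hq : 0 < q) (lam : V) (γ : V) (c : ℂ) :
    evA' q ε hq lam (AddMonoidAlgebra.single γ c)
      = c * (((q ^ (ε * ⟪γ, lam⟫) : ℝ)) : ℂ) := by
  rw [evA', AddMonoidAlgebra.lift_single, smul_eq_mul]
  rfl

lemma evA'_single_zero (q ε : ℝ) (hq : 0 < q) (lam : V) (c : ℂ) :
    evA' q ε hq lam (AddMonoidAlgebra.single (0:V) c) = c := by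
  rw [evA'_single]
  simp [Real.rpow_zero]



theorem statement18' {V : Type*} [NormedAddCommGroup V] [InnerProductSpace ℝ V]
    [FiniteDimensional ℝ V] {N : ℕ} (Δ : RootSystemData V N)
    (μ : V)
    (q : ℝ) (hq : 0 < q)
    (k : V → ℝ)
    (t : V → ℂ) (ht : Δ.WInvPar t)
    (ε : ℝ)
    (WF : Finset (V ≃ₗ[ℝ] V)) (hWF : ↑WF = (Δ.weylGroup : Set (V ≃ₗ[ℝ] V)))
    (ht0 : ∀ α ∈ Δ.Rplus, t α ≠ 0)
    (hden : ∀ α ∈ Δ.Rplus,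
      1 - t α * ((q ^ (ε * ⟪coroot α, μ + Δ.rhok k⟫) : ℝ) : ℂ) ≠ 0) :
    ∑ w ∈ WF, ∏ α ∈ Δ.RwD w,
      t α * (1 - (t α)⁻¹ * ((q ^ (ε * ⟪coroot α, μ + Δ.rhok k⟫) : ℝ) : ℂ)) /
        (1 - t α * ((q ^ (ε * ⟪coroot α, μ + Δ.rhok k⟫) : ℝ) : ℂ))
    = (∑ w ∈ WF, ∏ α ∈ Δ.RwD w, t α) *
        ∏ α ∈ Δ.Rplus,
          (1 - ((q ^ (ε * ⟪coroot α, μ + Δ.rhok k⟫) : ℝ) : ℂ)) /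
            (1 - t α * ((q ^ (ε * ⟪coroot α, μ + Δ.rhok k⟫) : ℝ) : ℂ)) := by
  classical
  set lam : V := μ + Δ.rhok k with hlam
  set z : V → ℂ := fun γ => (((q ^ (ε * ⟪γ, lam⟫) : ℝ)) : ℂ) with hzdef
  have hz0 : z 0 = 1 := by
    rw [hzdef]
    simp [Real.rpow_zero]
  set ev : GA V →ₐ[ℂ] ℂ := evA' q ε hq lam with hevdef
  have hev : ∀ (γ : V) (c : ℂ), ev (AddMonoidAlgebra.single γ c) = c * z γ :=
    fun γ c => evA'_single q ε hq lam γ c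
  -- evaluate the main algebraic identity
  have hmain := congrArg ev (Δ.main_alg t ht WF hWF)
  rw [map_sum, map_mul] at hmain
  have hFw : ∀ w : V ≃ₗ[ℝ] V, ev (Δ.Fw t w) =
      (∏ α ∈ Δ.RwD w, (t α - z (coroot α))) *
        ∏ α ∈ Δ.Rplus \ Δ.RwD w, (1 - t α * z (coroot α)) := by
    intro w
    rw [RootSystemData.Fw, map_prod]
    have h1 : ∀ α ∈ Δ.Rplus,
        ev ((AddMonoidAlgebra.single (coroot α)
            (if -(w α) ∈ Δ.Rplus then (-1:ℂ) else -(t α)) : GA V)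
          + AddMonoidAlgebra.single 0 (if -(w α) ∈ Δ.Rplus then t α else 1))
        = if -(w α) ∈ Δ.Rplus then (t α - z (coroot α)) else (1 - t α * z (coroot α)) := by
      intro α _
      by_cases hc : -(w α) ∈ Δ.Rplus
      · rw [if_pos hc, if_pos hc, if_pos hc, map_add, hev, hev, hz0]
        ring
      · rw [if_neg hc, if_neg hc, if_neg hc, map_add, hev, hev, hz0]
        ring
    rw [Finset.prod_congr rfl h1, Finset.prod_ite]
    congr 1
    apply Finset.prod_congr _ (fun _ _ => rfl)
    rw [RootSystemData.RwD, ← Finset.filter_not]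
  have hP1 : ev Δ.P1 = ∏ α ∈ Δ.Rplus, (1 - z (coroot α)) := by
    rw [RootSystemData.P1, map_prod]
    refine Finset.prod_congr rfl fun α _ => ?_
    rw [map_add, hev, hev, hz0]
    ring
  rw [Finset.sum_congr rfl (fun w _ => hFw w), hP1, hev] at hmain
  -- `hmain : ∑ w, num_w * out_w = Wt * z 0 * ∏ (1 - z)`, clean up `z 0`
  rw [hz0, mul_one] at hmain
  -- final division bookkeeping
  set Wt : ℂ := ∑ w ∈ WF, ∏ α ∈ Δ.RwD w, t α with hWt
  set D : ℂ := ∏ α ∈ Δ.Rplus, (1 - t α * z (coroot α)) with hD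
  have hden' : ∀ α ∈ Δ.Rplus, 1 - t α * z (coroot α) ≠ 0 := fun α hα => hden α hα
  have hDne : D ≠ 0 := Finset.prod_ne_zero_iff.mpr hden'
  have hstep : ∀ w : V ≃ₗ[ℝ] V,
      ∏ α ∈ Δ.RwD w, (t α * (1 - (t α)⁻¹ * z (coroot α)) / (1 - t α * z (coroot α)))
        = ((∏ α ∈ Δ.RwD w, (t α - z (coroot α))) *
            ∏ α ∈ Δ.Rplus \ Δ.RwD w, (1 - t α * z (coroot α))) / D := by
    intro w
    have hsub : Δ.RwD w ⊆ Δ.Rplus := Finset.filter_subset _ _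
    have hnum : ∀ α ∈ Δ.RwD w,
        t α * (1 - (t α)⁻¹ * z (coroot α)) / (1 - t α * z (coroot α))
          = (t α - z (coroot α)) / (1 - t α * z (coroot α)) := by
      intro α hα
      have htα : t α ≠ 0 := ht0 α (hsub hα)
      rw [mul_sub, mul_one, ← mul_assoc, mul_inv_cancel₀ htα, one_mul]
    rw [Finset.prod_congr rfl hnum, Finset.prod_div_distrib]
    have hsplit : D = (∏ α ∈ Δ.Rplus \ Δ.RwD w, (1 - t α * z (coroot α))) *
        ∏ α ∈ Δ.RwD w, (1 - t α * z (coroot α)) := (Finset.prod_sdiff hsub).symm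
    have hR : (∏ α ∈ Δ.RwD w, (1 - t α * z (coroot α))) ≠ 0 :=
      Finset.prod_ne_zero_iff.mpr (fun α hα => hden' α (hsub hα))
    have hO : (∏ α ∈ Δ.Rplus \ Δ.RwD w, (1 - t α * z (coroot α))) ≠ 0 :=
      Finset.prod_ne_zero_iff.mpr (fun α hα => hden' α (Finset.mem_sdiff.mp hα).1)
    rw [hsplit]
    field_simp
  calc ∑ w ∈ WF, ∏ α ∈ Δ.RwD w,
      (t α * (1 - (t α)⁻¹ * z (coroot α)) / (1 - t α * z (coroot α)))
      = ∑ w ∈ WF, ((∏ α ∈ Δ.RwD w, (t α - z (coroot α))) *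
          ∏ α ∈ Δ.Rplus \ Δ.RwD w, (1 - t α * z (coroot α))) / D :=
        Finset.sum_congr rfl fun w _ => hstep w
    _ = (∑ w ∈ WF, (∏ α ∈ Δ.RwD w, (t α - z (coroot α))) *
          ∏ α ∈ Δ.Rplus \ Δ.RwD w, (1 - t α * z (coroot α))) / D :=
        (Finset.sum_div _ _ _).symm
    _ = (Wt * ∏ α ∈ Δ.Rplus, (1 - z (coroot α))) / D := by rw [hmain]
    _ = Wt * ∏ α ∈ Δ.Rplus, ((1 - z (coroot α)) / (1 - t α * z (coroot α))) := by
        rw [Finset.prod_div_distrib, ← hD, mul_div_assoc]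


end MacdonaldDev

/-- Macdonald's Poincaré-polynomial identity with arbitrary `W`-invariant
complex parameters `t_α`:
`Σ_{w∈W} ∏_{α^∨∈R_w^∨} t_α(1-t_α⁻¹q^{ε⟨α^∨,μ+ρ_k⟩})/(1-t_αq^{ε⟨α^∨,μ+ρ_k⟩})
  = W(t) ∏_{α∈R_+} (1-q^{ε⟨α^∨,μ+ρ_k⟩})/(1-t_αq^{ε⟨α^∨,μ+ρ_k⟩})`. -/
theorem statement18 {V : Type*} [NormedAddCommGroup V] [InnerProductSpace ℝ V]
    [FiniteDimensional ℝ V] {N : ℕ} (Δ : RootSystemData V N)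
    (μ : V) (hμ : Δ.IsDomWeight μ)
    (q : ℝ) (hq : 0 < q)
    (k : V → ℝ) (hk : Δ.WInvPar k)
    (t : V → ℂ) (ht : Δ.WInvPar t)
    (ε : ℝ) (hε : ε = 1 ∨ ε = -1)
    (WF : Finset (V ≃ₗ[ℝ] V)) (hWF : ↑WF = (Δ.weylGroup : Set (V ≃ₗ[ℝ] V)))
    (ht0 : ∀ α ∈ Δ.Rplus, t α ≠ 0)
    (hden : ∀ α ∈ Δ.Rplus,
      1 - t α * ((q ^ (ε * ⟪coroot α, μ + Δ.rhok k⟫) : ℝ) : ℂ) ≠ 0) :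
    ∑ w ∈ WF, ∏ α ∈ Δ.RwD w,
      t α * (1 - (t α)⁻¹ * ((q ^ (ε * ⟪coroot α, μ + Δ.rhok k⟫) : ℝ) : ℂ)) /
        (1 - t α * ((q ^ (ε * ⟪coroot α, μ + Δ.rhok k⟫) : ℝ) : ℂ))
    = (∑ w ∈ WF, ∏ α ∈ Δ.RwD w, t α) *
        ∏ α ∈ Δ.Rplus,
          (1 - ((q ^ (ε * ⟪coroot α, μ + Δ.rhok k⟫) : ℝ) : ℂ)) /
            (1 - t α * ((q ^ (ε * ⟪coroot α, μ + Δ.rhok k⟫) : ℝ) : ℂ)) := by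
  exact statement18' Δ μ q hq k t ht ε WF hWF ht0 hden

end HO
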